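/- In the recursive construction of T_i^j: if j = 1 then the maximum degree of T_i^1 is 2i − 2, achieved at the root; if j ≥ 2 then the maximum degree of T_i^j is 2(i+j) − 3. -/

import Mathlib

/-- A rooted tree with a natural-number color at each vertex. -/
inductive CTree where
  | node : ℕ → List CTree → CTree

namespace CTree

/-- The color of the root. -/
def color : CTree → ℕ
  | node c _ => c

/-- The list of child subtrees of the root. -/
def children : CTree → List CTree
  | node _ l => l

/-- The sum of all colors in the tree. -/
def sumColors : CTree → ℕ
  | node c l => c + (l.attach.map fun ⟨t, _⟩ => sumColors t).sum
decreasing_by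
  simp only [CTree.node.sizeOf_spec]
  rename_i hm
  have := List.sizeOf_lt_of_mem hm
  omega

/-- The maximum color used in the tree. -/
def maxColor : CTree → ℕ
  | node c l => max c ((l.attach.map fun ⟨t, _⟩ => maxColor t).foldr max 0)
decreasing_by
  simp only [CTree.node.sizeOf_spec]
  rename_i hm
  have := List.sizeOf_lt_of_mem hm
  omega

/-- The coloring is proper: colors are positive and each child's root color
differs from its parent's color. -/
def Proper : CTree → Prop
  | node c l => 1 ≤ c ∧ ∀ t ∈ l, color t ≠ c ∧ Proper t
decreasing_by
  simp only [CTree.node.sizeOf_spec]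
  rename_i hm
  have := List.sizeOf_lt_of_mem hm
  omega

/-- Two colored rooted trees have the same underlying (rooted) tree shape. -/
def SameShape : CTree → CTree → Prop
  | node _ l, node _ l' => l.length = l'.length ∧ ∀ p ∈ l.zip l', SameShape p.1 p.2
termination_by t _ => sizeOf t
decreasing_by
  simp only [CTree.node.sizeOf_spec]
  rename_i hm
  have := List.sizeOf_lt_of_mem (List.of_mem_zip hm).1
  omega

/-- The maximum degree among vertices of a subtree hanging below a root
(the subtree's own root has an extra edge to its parent). -/
def maxDegAux : CTree → ℕ
  | node _ l => max (l.length + 1) ((l.attach.map fun ⟨t, _⟩ => maxDegAux t).foldr max 0)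
decreasing_by
  simp only [CTree.node.sizeOf_spec]
  rename_i hm
  have := List.sizeOf_lt_of_mem hm
  omega

/-- The maximum degree of the rooted tree. -/
def maxDeg : CTree → ℕ
  | node _ l => max l.length ((l.attach.map fun ⟨t, _⟩ => maxDegAux t).foldr max 0)

/-- The set of colors used in the tree. -/
def colorFinset : CTree → Finset ℕ
  | node c l => insert c ((l.attach.map fun ⟨t, _⟩ => colorFinset t).foldr (· ∪ ·) ∅)
decreasing_by
  simp only [CTree.node.sizeOf_spec]
  rename_i hm
  have := List.sizeOf_lt_of_mem hm
  omega

end CTree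

open CTree in
/-- The tree `T_i^j` of the construction, together with its coloring `f_i^j`:
the root is colored `i` and has, for each `k` with `1 ≤ k ≤ i+j-1` and `k ≠ i`,
two child copies of `T_k^{⌈(i+j-k)/2⌉}` colored by `f_k^{⌈(i+j-k)/2⌉}`. -/
def buildT (i j : ℕ) : CTree :=
  if j = 0 ∨ i + j ≤ 2 then .node i []
  else .node i <|
    (List.range (i + j - 1)).attach.flatMap fun ⟨k', _⟩ =>
      let k := k' + 1
      if k = i then []
      else
        let m := (i + j - k + 1) / 2
        [buildT k m, buildT k m]
termination_by (i + j, j)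
decreasing_by
  all_goals
  · rename_i hcond hmem hne
    have hk' : k' < i + j - 1 := List.mem_range.mp hmem
    push_neg at hcond
    rcases Nat.lt_or_ge (k' + 1 + (i + j - (k' + 1) + 1) / 2) (i + j) with hlt | hge
    · exact Prod.Lex.left _ _ hlt
    · have heq : k' + 1 + (i + j - (k' + 1) + 1) / 2 = i + j := by omega
      rw [heq]
      exact Prod.Lex.right _ (by omega)


lemma foldr_max_le {l : List ℕ} {c : ℕ} (h : ∀ x ∈ l, x ≤ c) : l.foldr max 0 ≤ c := by
  induction l with
  | nil => simp
  | cons a t ih =>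
    simp only [List.foldr_cons]
    exact max_le (h a (by simp)) (ih fun x hx => h x (List.mem_cons_of_mem _ hx))

lemma le_foldr_max {l : List ℕ} {x : ℕ} (h : x ∈ l) : x ≤ l.foldr max 0 := by
  induction l with
  | nil => simp at h
  | cons a t ih =>
    rcases List.mem_cons.mp h with rfl | h
    · exact le_max_left _ _
    · exact le_trans (ih h) (le_max_right _ _)

lemma list_attach_map_eq {α β : Type*} (l : List α) (f : α → β)
    (g : {x // x ∈ l} → β) (hg : ∀ x (h : x ∈ l), g ⟨x, h⟩ = f x) :
    l.attach.map g = l.map f := by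
  calc l.attach.map g = l.attach.map (fun x => f x.1) := by
        apply List.map_congr_left
        rintro ⟨a, ha⟩ _
        exact hg a ha
    _ = l.map f := List.attach_map_val

lemma list_attach_flatMap_eq {α β : Type*} (l : List α) (f : α → List β)
    (g : {x // x ∈ l} → List β) (hg : ∀ x (h : x ∈ l), g ⟨x, h⟩ = f x) :
    l.attach.flatMap g = l.flatMap f := by
  rw [List.flatMap_def, List.flatMap_def, list_attach_map_eq l f g hg]

lemma maxDegAux_node (c : ℕ) (l : List CTree) :
    CTree.maxDegAux (.node c l) = max (l.length + 1) ((l.map CTree.maxDegAux).foldr max 0) := by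
  rw [CTree.maxDegAux, list_attach_map_eq l CTree.maxDegAux _ (fun x h => rfl)]

lemma maxDeg_node (c : ℕ) (l : List CTree) :
    CTree.maxDeg (.node c l) = max l.length ((l.map CTree.maxDegAux).foldr max 0) := by
  rw [CTree.maxDeg, list_attach_map_eq l CTree.maxDegAux _ (fun x h => rfl)]

lemma children_node (c : ℕ) (l : List CTree) : (CTree.node c l).children = l := rfl

lemma buildT_eq_node (i m : ℕ) (h : ¬(m = 0 ∨ i + m ≤ 2)) :
    buildT i m = .node i ((List.range (i + m - 1)).flatMap fun k' =>
      if k' + 1 = i then ([] : List CTree)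
      else [buildT (k' + 1) ((i + m - (k' + 1) + 1) / 2),
            buildT (k' + 1) ((i + m - (k' + 1) + 1) / 2)]) := by
  rw [buildT, if_neg h]
  congr 1
  exact list_attach_flatMap_eq _ _ _ (fun x hx => rfl)

lemma sum_if_aux (i : ℕ) : ∀ n : ℕ,
    ((List.range n).map fun k => if k + 1 = i then (0 : ℕ) else 2).sum =
      if i ≤ n ∧ 1 ≤ i then 2 * n - 2 else 2 * n := by
  intro n
  induction n with
  | zero => rw [if_neg (by omega)]; simp
  | succ n ih =>
    rw [List.range_succ, List.map_append, List.sum_append, ih]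
    simp only [List.map_cons, List.map_nil, List.sum_cons, List.sum_nil]
    by_cases h : n + 1 = i
    · rw [if_pos h, if_neg (by omega), if_pos (by omega)]
      omega
    · rw [if_neg h]
      by_cases h2 : i ≤ n ∧ 1 ≤ i
      · rw [if_pos h2, if_pos ⟨by omega, h2.2⟩]
        omega
      · rw [if_neg h2, if_neg (fun hc => h2 ⟨by omega, hc.2⟩)]
        omega

lemma flatMapL_length (n i : ℕ) (g : ℕ → CTree) (hi : 1 ≤ i) (hin : i ≤ n) :
    ((List.range n).flatMap fun k =>
        if k + 1 = i then ([] : List CTree) else [g k, g k]).length = 2 * n - 2 := by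
  rw [List.length_flatMap]
  have h1 : (List.map (List.length ∘ fun k =>
      if k + 1 = i then ([] : List CTree) else [g k, g k]) (List.range n)) =
      (List.range n).map fun k => if k + 1 = i then (0 : ℕ) else 2 := by
    apply List.map_congr_left
    intro k _
    simp only [Function.comp_apply]
    split <;> rfl
  simp only [Function.comp_def] at h1
  rw [h1, sum_if_aux, if_pos ⟨hin, hi⟩]

lemma mem_flatMapL {t : CTree} {n i : ℕ} {g : ℕ → CTree} :
    t ∈ ((List.range n).flatMap fun k =>
        if k + 1 = i then ([] : List CTree) else [g k, g k]) ↔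
      ∃ k < n, k + 1 ≠ i ∧ t = g k := by
  simp only [List.mem_flatMap, List.mem_range]
  constructor
  · rintro ⟨k, hk, hmem⟩
    by_cases hc : k + 1 = i
    · rw [if_pos hc] at hmem; simp at hmem
    · rw [if_neg hc] at hmem
      refine ⟨k, hk, hc, ?_⟩
      rcases List.mem_cons.mp hmem with h | h
      · exact h
      · simpa using h
  · rintro ⟨k, hk, hc, rfl⟩
    exact ⟨k, hk, by rw [if_neg hc]; exact List.mem_cons_self⟩

lemma maxDegAux_buildT (i m : ℕ) (hi : 1 ≤ i) (hm : 1 ≤ m) :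
    CTree.maxDegAux (buildT i m) = if i + m ≤ 2 then 1 else 2 * (i + m) - 3 := by
  by_cases h2 : i + m ≤ 2
  · rw [if_pos h2, buildT, if_pos (Or.inr h2)]
    simp [maxDegAux_node]
  · rw [if_neg h2, buildT_eq_node i m (by omega), maxDegAux_node,
      flatMapL_length _ _ _ hi (by omega)]
    have hb : ∀ x ∈ ((List.range (i + m - 1)).flatMap fun k =>
        if k + 1 = i then ([] : List CTree)
        else [buildT (k + 1) ((i + m - (k + 1) + 1) / 2),
              buildT (k + 1) ((i + m - (k + 1) + 1) / 2)]).map CTree.maxDegAux,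
        x ≤ 2 * (i + m) - 3 := by
      intro x hx
      obtain ⟨t, ht, rfl⟩ := List.mem_map.mp hx
      obtain ⟨k', hk', hne, rfl⟩ := mem_flatMapL.mp ht
      rw [maxDegAux_buildT (k' + 1) ((i + m - (k' + 1) + 1) / 2) (by omega) (by omega)]
      split <;> omega
    have := foldr_max_le hb
    omega
termination_by (i + m, m)
decreasing_by
  rcases Nat.lt_or_ge (k' + 1 + (i + m - (k' + 1) + 1) / 2) (i + m) with hlt | hge
  · exact Prod.Lex.left _ _ hlt
  · have heq : k' + 1 + (i + m - (k' + 1) + 1) / 2 = i + m := by omega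
    rw [heq]
    exact Prod.Lex.right _ (by omega)

/-- If `j = 1` the maximum degree of `T_i^1` is `2i-2`, achieved at the root;
if `j ≥ 2` the maximum degree of `T_i^j` is `2(i+j)-3`. -/
theorem buildT_maxDeg (i j : ℕ) (hi : 1 ≤ i) (hj : 1 ≤ j) :
    (j = 1 → CTree.maxDeg (buildT i 1) = 2 * i - 2 ∧
      (buildT i 1).children.length = 2 * i - 2) ∧
    (2 ≤ j → CTree.maxDeg (buildT i j) = 2 * (i + j) - 3) := by
  have key : ∀ j, 1 ≤ j → CTree.maxDeg (buildT i j) =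
      if i + j ≤ 2 then 0 else if j = 1 then 2 * i - 2 else 2 * (i + j) - 3 := by
    intro j hj
    by_cases h2 : i + j ≤ 2
    · rw [if_pos h2, buildT, if_pos (Or.inr h2)]
      simp [maxDeg_node]
    · rw [if_neg h2, buildT_eq_node i j (by omega), maxDeg_node,
        flatMapL_length _ _ _ hi (by omega)]
      have hb : ∀ x ∈ ((List.range (i + j - 1)).flatMap fun k =>
          if k + 1 = i then ([] : List CTree)
          else [buildT (k + 1) ((i + j - (k + 1) + 1) / 2),
                buildT (k + 1) ((i + j - (k + 1) + 1) / 2)]).map CTree.maxDegAux,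
          x ≤ if j = 1 then 2 * i - 2 else 2 * (i + j) - 3 := by
        intro x hx
        obtain ⟨t, ht, rfl⟩ := List.mem_map.mp hx
        obtain ⟨k', hk', hne, rfl⟩ := mem_flatMapL.mp ht
        rw [maxDegAux_buildT (k' + 1) ((i + j - (k' + 1) + 1) / 2) (by omega) (by omega)]
        split
        · split <;> omega
        · split <;> omega
      have hub := foldr_max_le hb
      by_cases hj1 : j = 1
      · rw [if_pos hj1] at hub ⊢
        subst hj1
        omega
      · rw [if_neg hj1] at hub ⊢
        have hlb : 2 * (i + j) - 3 ≤
            (((List.range (i + j - 1)).flatMap fun k =>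
              if k + 1 = i then ([] : List CTree)
              else [buildT (k + 1) ((i + j - (k + 1) + 1) / 2),
                    buildT (k + 1) ((i + j - (k + 1) + 1) / 2)]).map
                CTree.maxDegAux).foldr max 0 := by
          have hmem : buildT (i + j - 1) 1 ∈
              ((List.range (i + j - 1)).flatMap fun k =>
                if k + 1 = i then ([] : List CTree)
                else [buildT (k + 1) ((i + j - (k + 1) + 1) / 2),
                      buildT (k + 1) ((i + j - (k + 1) + 1) / 2)]) := by
            rw [mem_flatMapL]
            refine ⟨i + j - 2, by omega, by omega, ?_⟩
            rw [show i + j - 2 + 1 = i + j - 1 from by omega]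
            rw [show (i + j - (i + j - 1) + 1) / 2 = 1 from by omega]
          have hval : CTree.maxDegAux (buildT (i + j - 1) 1) = 2 * (i + j) - 3 := by
            rw [maxDegAux_buildT _ _ (by omega) le_rfl, if_neg (by omega)]
            omega
          calc 2 * (i + j) - 3 = CTree.maxDegAux (buildT (i + j - 1) 1) := hval.symm
            _ ≤ _ := le_foldr_max (List.mem_map_of_mem hmem)
        omega
  constructor
  · intro _
    constructor
    · rw [key 1 le_rfl]
      split
      · omega
      · rw [if_pos rfl]
    · by_cases h2 : i + 1 ≤ 2
      · rw [buildT, if_pos (Or.inr h2), children_node]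
        simp
        omega
      · rw [buildT_eq_node i 1 (by omega), children_node,
          flatMapL_length _ _ _ hi (by omega)]
        omega
  · intro hj2
    rw [key j hj, if_neg (by omega), if_neg (by omega)]
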